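/- Suppose u(t,s,i) = d(t)s² + c(t,i)s + f(t,i) where d solves d' − 2κd + κ²/(2η²(1+ε)) = 0 with d(T)=0, and c(·,i), f(·,i) solve the coupled linear ODE systems c'(t,i) − κc(t,i) + 2κθᵢd(t) − (κ²θᵢ − κη²/2 + κρση)/(η²(1+ε)) + Σ_j c(t,j)q^{ij} = 0 and f'(t,i) + d(t)η² + κθᵢc(t,i) + (κθᵢ − η²/2 + ρση)²/(2η²(1+ε)) + Σ_j f(t,j)q^{ij} = 0 with c(T,i)=f(T,i)=0. Then u satisfies the PDE u_t + κ(θᵢ−s)u_s + (η²/2)u_{ss} + Σ_j u(t,s,j)q^{ij} + (κ(θᵢ−s) − η²/2 + ρση)²/(2η²(1+ε)) = 0 with u(T,s,i)=0 for all s ∈ ℝ and i ∈ {1,…,K}. -/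

import Mathlib

/-!
Substituting the ansatz, `u_t` is read off from the ODEs for `d`, `c`, `f`, while `u_s` and `u_ss`
are those of a quadratic. Since the rows of `Q` sum to zero, the `d s²` part of `u` drops out of
`Σ_j u(t,s,j) q^{ij}`. What remains is a polynomial in `s` whose coefficients of `s²`, `s` and `1`
vanish identically: each ODE is exactly the vanishing of one of them.
-/

open Finset

section Quadratic

variable {𝕜 : Type*} [NontriviallyNormedField 𝕜]

theorem hasDerivAt_quadratic (a b c x : 𝕜) :
    HasDerivAt (fun y => a * y ^ 2 + b * y + c) (2 * a * x + b) x := by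
  refine ((((hasDerivAt_pow 2 x).const_mul a).add
    (hasDerivAt_id' x |>.const_mul b)).add_const c).congr_deriv ?_
  push_cast
  ring

theorem deriv_quadratic (a b c x : 𝕜) :
    deriv (fun y => a * y ^ 2 + b * y + c) x = 2 * a * x + b :=
  (hasDerivAt_quadratic a b c x).deriv

theorem deriv_deriv_quadratic (a b c x : 𝕜) :
    deriv (deriv fun y => a * y ^ 2 + b * y + c) x = 2 * a := by
  have hlin : HasDerivAt (fun y => 2 * a * y + b) (2 * a) x := by
    simpa using ((hasDerivAt_id' x).const_mul (2 * a)).add_const b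
  rw [funext (deriv_quadratic a b c), hlin.deriv]

theorem HasDerivAt.quadratic_coeffs {a b c : 𝕜 → 𝕜} {a' b' c' t : 𝕜}
    (ha : HasDerivAt a a' t) (hb : HasDerivAt b b' t) (hc : HasDerivAt c c' t) (s : 𝕜) :
    HasDerivAt (fun τ => a τ * s ^ 2 + b τ * s + c τ) (a' * s ^ 2 + b' * s + c') t :=
  ((ha.mul_const _).add (hb.mul_const s)).add hc

end Quadratic

theorem sum_quadratic_mul_of_sum_eq_zero {ι R : Type*} [Fintype ι] [CommRing R] {q : ι → R}
    (hq : ∑ j, q j = 0) (a s : R) (b c : ι → R) :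
    ∑ j, (a * s ^ 2 + b j * s + c j) * q j = (∑ j, b j * q j) * s + ∑ j, c j * q j := by
  simp only [add_mul, sum_add_distrib, ← mul_sum, hq, mul_zero, zero_add, sum_mul,
    mul_right_comm _ s]

theorem stmt_8_general (K : ℕ) (q : Fin K → Fin K → ℝ)
    (hQ : ∀ i, ∑ j, q i j = 0) (θ : Fin K → ℝ)
    (κ η σ ρ ε T : ℝ)
    (d : ℝ → ℝ) (c f : ℝ → Fin K → ℝ)
    (hd : ∀ t : ℝ, HasDerivAt d (2 * κ * d t - κ ^ 2 / (2 * η ^ 2 * (1 + ε))) t)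
    (hdT : d T = 0)
    (hc : ∀ t : ℝ, ∀ i, HasDerivAt (fun τ => c τ i)
      (κ * c t i - 2 * κ * θ i * d t
        + (κ ^ 2 * θ i - κ * η ^ 2 / 2 + κ * ρ * σ * η) / (η ^ 2 * (1 + ε))
        - ∑ j, c t j * q i j) t)
    (hcT : ∀ i, c T i = 0)
    (hf : ∀ t : ℝ, ∀ i, HasDerivAt (fun τ => f τ i)
      (-(d t * η ^ 2) - κ * θ i * c t i
        - (κ * θ i - η ^ 2 / 2 + ρ * σ * η) ^ 2 / (2 * η ^ 2 * (1 + ε))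
        - ∑ j, f t j * q i j) t)
    (hfT : ∀ i, f T i = 0)
    (u : ℝ → ℝ → Fin K → ℝ)
    (hu : ∀ t s i, u t s i = d t * s ^ 2 + c t i * s + f t i) :
    (∀ (t s : ℝ) (i : Fin K),
        deriv (fun τ => u τ s i) t
          + κ * (θ i - s) * deriv (fun x => u t x i) s
          + η ^ 2 / 2 * deriv (deriv (fun x => u t x i)) s
          + (∑ j, u t s j * q i j)
          + (κ * (θ i - s) - η ^ 2 / 2 + ρ * σ * η) ^ 2 / (2 * η ^ 2 * (1 + ε)) = 0) ∧
      (∀ (s : ℝ) (i : Fin K), u T s i = 0) := by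
  obtain rfl : u = fun t s i => d t * s ^ 2 + c t i * s + f t i := by
    funext t s i; exact hu t s i
  refine ⟨fun t s i => ?_, fun s i => by simp [hdT, hcT, hfT]⟩
  simp only [sum_quadratic_mul_of_sum_eq_zero (hQ i), deriv_quadratic, deriv_deriv_quadratic,
    ((hd t).quadratic_coeffs (hc t i) (hf t i) s).deriv, mul_assoc 2 (η ^ 2)]
  -- `ring` cannot split the inverse of a sum, but with `η ^ 2 * (1 + ε)` an atom it handles
  -- `(2 * A)⁻¹`, whatever the value of `A`
  generalize η ^ 2 * (1 + ε) = A
  ring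

/-- Verification that the quadratic-in-`s` ansatz `u(t,s,i) = d(t)s² + c(t,i)s + f(t,i)`,
with `d`, `c`, `f` solving the stated ODE systems with zero terminal conditions,
satisfies the Feynman–Kac PDE
`u_t + κ(θᵢ−s)u_s + (η²/2)u_{ss} + Σ_j u(t,s,j)q^{ij}
  + (κ(θᵢ−s) − η²/2 + ρση)²/(2η²(1+ε)) = 0` with `u(T,s,i) = 0`. -/
theorem stmt_8 (K : ℕ) (hK : 0 < K) (q : Fin K → Fin K → ℝ)
    (hQ : ∀ i, ∑ j, q i j = 0) (θ : Fin K → ℝ)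
    (κ η σ ρ ε T : ℝ) (hκ : 0 < κ) (hη : 0 < η) (hσ : 0 < σ)
    (hρ : ρ ∈ Set.Ioo (-1 : ℝ) 1) (hε : 0 ≤ ε) (hT : 0 < T)
    (d : ℝ → ℝ) (c f : ℝ → Fin K → ℝ)
    (hd : ∀ t : ℝ, HasDerivAt d (2 * κ * d t - κ ^ 2 / (2 * η ^ 2 * (1 + ε))) t)
    (hdT : d T = 0)
    (hc : ∀ t : ℝ, ∀ i, HasDerivAt (fun τ => c τ i)
      (κ * c t i - 2 * κ * θ i * d t
        + (κ ^ 2 * θ i - κ * η ^ 2 / 2 + κ * ρ * σ * η) / (η ^ 2 * (1 + ε))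
        - ∑ j, c t j * q i j) t)
    (hcT : ∀ i, c T i = 0)
    (hf : ∀ t : ℝ, ∀ i, HasDerivAt (fun τ => f τ i)
      (-(d t * η ^ 2) - κ * θ i * c t i
        - (κ * θ i - η ^ 2 / 2 + ρ * σ * η) ^ 2 / (2 * η ^ 2 * (1 + ε))
        - ∑ j, f t j * q i j) t)
    (hfT : ∀ i, f T i = 0)
    (u : ℝ → ℝ → Fin K → ℝ)
    (hu : ∀ t s i, u t s i = d t * s ^ 2 + c t i * s + f t i) :
    (∀ (t s : ℝ) (i : Fin K),
        deriv (fun τ => u τ s i) t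
          + κ * (θ i - s) * deriv (fun x => u t x i) s
          + η ^ 2 / 2 * deriv (deriv (fun x => u t x i)) s
          + (∑ j, u t s j * q i j)
          + (κ * (θ i - s) - η ^ 2 / 2 + ρ * σ * η) ^ 2 / (2 * η ^ 2 * (1 + ε)) = 0) ∧
      (∀ (s : ℝ) (i : Fin K), u T s i = 0) :=
  stmt_8_general K q hQ θ κ η σ ρ ε T d c f hd hdT hc hcT hf hfT u hu
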